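/- Assume there exists a projection map proj from Gauss diagrams to realizable Gauss diagrams such that: (1) proj sends equivalent diagrams to equivalent diagrams, (2) proj(G) is obtained from G by deleting chords, (3) proj(G) = G for realizable G. Then for every classical knot K and every virtual knot K̃ realizable by K, the virtual canonical genus satisfies g_vc(K̃) = g_c(K). -/

import Mathlib

/-- A Gauss diagram with `n` (signed, oriented) chords: the `2*n` chord endpoints lie on
the core circle in cyclic order `0, 1, …, 2n-1`, and are paired off (each chord giving a
pair of endpoints) by a fixed-point-free involution.  The signs/orientations of chords do
not affect the ribbon surface. -/
structure GaussDiagram where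
  n : ℕ
  pairing : Equiv.Perm (Fin (2 * n))
  involutive : ∀ i, pairing (pairing i) = i
  fixfree : ∀ i, pairing i ≠ i

/-- The number of orbits (cycles, including fixed points) of a permutation of `Fin m`. -/
def numOrbits {m : ℕ} (p : Equiv.Perm (Fin m)) : ℕ :=
  (m - p.cycleType.sum) + p.cycleType.card

/-- The boundary permutation of the ribbon surface `F'_G` (annulus with one orientably
attached band per chord): traversing the boundary, after endpoint `i` one crosses the
band to `pairing i` and proceeds to the next endpoint `pairing i + 1`. -/
def boundaryPerm (G : GaussDiagram) : Equiv.Perm (Fin (2 * G.n)) :=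
  G.pairing.trans (finRotate (2 * G.n))

/-- The number `c` of boundary components of the ribbon surface `F'_G`
(for `n = 0`, `F'_G` is the annulus, with two boundary circles). -/
def ribbonBoundary (G : GaussDiagram) : ℕ :=
  if G.n = 0 then 2 else numOrbits (boundaryPerm G) + 1

/-- Euler characteristic of the ribbon surface `F'_G`: the annulus has `χ = 0` and each
attached band decreases `χ` by one, so `χ(F'_G) = -n`. -/
def ribbonChi (G : GaussDiagram) : ℤ := -(G.n : ℤ)

/-- Euler characteristic of the closed orientable surface `F_G` obtained by capping each
of the `c` boundary circles of `F'_G` with a disk: `χ(F_G) = -n + c`. -/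
def chiF (G : GaussDiagram) : ℤ := -(G.n : ℤ) + (ribbonBoundary G : ℤ)

/-- Genus of the closed orientable surface `F_G`, via `χ(F_G) = -n + c = 2 - 2g`. -/
def genusF (G : GaussDiagram) : ℕ := (G.n + 2 - ribbonBoundary G) / 2

/-- `G₁` is obtained from `G₂` by deleting one chord: there is a (cyclic-)order
preserving embedding of the endpoints of `G₁` into those of `G₂`, commuting with the
pairings, whose image misses exactly the two endpoints of one chord of `G₂`. -/
def IsChordDeletion (G₁ G₂ : GaussDiagram) : Prop :=
  G₂.n = G₁.n + 1 ∧
  ∃ ι : Fin (2 * G₁.n) ↪o Fin (2 * G₂.n),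
    (∀ i, G₂.pairing (ι i) = ι (G₁.pairing i)) ∧
    ∃ a : Fin (2 * G₂.n), ∀ i, ι i ≠ a ∧ ι i ≠ G₂.pairing a

/-!
Deleting a chord cannot increase the genus of `F_G`. Deleting the chord `{a, b}` of `G₂` cuts a
band of the ribbon surface: the boundary permutation `σ₂` becomes `f = σ₂ * swap a b`, which runs
along the core circle at `a` and `b`, so skipping these two points identifies the cycles of `f`
with those of the boundary permutation `σ₁` of the smaller diagram. Multiplying by a transposition
changes the number of cycles by at most one, so the number `c` of boundary components grows by at
most one while `n` grows by one, and `g = (n + 2 - c) / 2` does not decrease.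

Hence for `G ~ G₀` the diagram `proj G` is realizable, equivalent to `proj G₀ = G₀`, and of genus
at most that of `G`, so both minima agree.
-/

open Equiv Equiv.Perm Finset

namespace Equiv.Perm

variable {α β : Type*}

theorem card_quotient_sameCycle [Fintype α] [DecidableEq α] (p : Perm α) :
    Nat.card (Quotient (SameCycle.setoid p)) =
      Fintype.card (Function.fixedPoints p) + #p.cycleFactorsFinset := by
  let κ : α → Function.fixedPoints p ⊕ p.cycleFactorsFinset := fun x =>
    if hx : p x = x then .inl ⟨x, hx⟩
    else .inr ⟨p.cycleOf x, cycleOf_mem_cycleFactorsFinset_iff.2 (mem_support.2 hx)⟩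
  have hker : SameCycle.setoid p = Setoid.ker κ := by
    ext x y
    change p.SameCycle x y ↔ κ x = κ y
    by_cases hx : p x = x <;> by_cases hy : p y = y <;> simp only [κ, hx, hy, dite_true, dite_false]
    · rw [Sum.inl.injEq, Subtype.ext_iff]
      exact ⟨fun h => h.eq_of_left hx, fun h : x = y => h ▸ SameCycle.rfl⟩
    · simpa using fun h : p.SameCycle x y => hy ((h.apply_eq_self_iff).1 hx)
    · simpa using fun h : p.SameCycle x y => hx ((h.apply_eq_self_iff).2 hy)
    · simp only [Sum.inr.injEq, Subtype.mk.injEq]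
      exact sameCycle_iff_cycleOf_eq_of_mem_support (mem_support.2 hx) (mem_support.2 hy)
  have hsurj : Function.Surjective κ := by
    rintro (⟨x, hx⟩ | ⟨c, hc⟩)
    · exact ⟨x, by simp [κ, show p x = x from hx]⟩
    · obtain ⟨x, hx⟩ := (mem_cycleFactorsFinset_iff.1 hc).1.nonempty_support
      have hpx : p x ≠ x := mem_support.1 (mem_cycleFactorsFinset_support_le hc hx)
      exact ⟨x, by simp [κ, hpx, ← cycle_is_cycleOf hx hc]⟩
  rw [hker, Nat.card_congr (Setoid.quotientKerEquivOfSurjective κ hsurj), Nat.card_sum,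
    Nat.card_eq_fintype_card, Nat.card_eq_finsetCard]

theorem sameCycle_iff_of_forall_ne_apply_eq [Finite α] {f g : Perm α} {a b x y : α}
    (hfg : ∀ z, z ≠ a → z ≠ b → f z = g z) (ha : ¬g.SameCycle x a) (hb : ¬g.SameCycle x b) :
    f.SameCycle x y ↔ g.SameCycle x y := by
  have hpow : ∀ k : ℕ, (f ^ k) x = (g ^ k) x := by
    intro k
    induction k with
    | zero => rfl
    | succ k ih =>
      have hxk : g.SameCycle x ((g ^ k) x) := sameCycle_pow_right.2 SameCycle.rfl
      rw [pow_succ', pow_succ', mul_apply, mul_apply, ih]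
      exact hfg _ (fun h => ha (h ▸ hxk)) (fun h => hb (h ▸ hxk))
  constructor <;> intro h <;> obtain ⟨k, rfl⟩ := h.exists_nat_pow_eq
  · rw [hpow]
    exact sameCycle_pow_right.2 SameCycle.rfl
  · rw [← hpow]
    exact sameCycle_pow_right.2 SameCycle.rfl

theorem card_quotient_sameCycle_mul_swap_le [Finite α] [DecidableEq α] (f : Perm α) (a b : α) :
    Nat.card (Quotient (SameCycle.setoid (f * swap a b))) ≤
      Nat.card (Quotient (SameCycle.setoid f)) + 1 := by
  classical
  set g := f * swap a b
  have hfg : ∀ z, z ≠ a → z ≠ b → f z = g z := fun z ha hb => by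
    simp [g, swap_apply_of_ne_of_ne ha hb]
  -- Away from the cycles of `g` through `a` and `b`, the permutations `f` and `g` agree.
  let rep : α → α := fun x => if g.SameCycle x b then b else x
  let κ : α → Option (Quotient (SameCycle.setoid f)) := fun x =>
    if g.SameCycle x a then none else some ⟦rep x⟧
  have hκ : ∀ x y, g.SameCycle x y → κ x = κ y := by
    intro x y h
    have ha : g.SameCycle x a ↔ g.SameCycle y a := ⟨h.symm.trans, h.trans⟩
    have hb : g.SameCycle x b ↔ g.SameCycle y b := ⟨h.symm.trans, h.trans⟩
    simp only [κ, rep, ha, hb]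
    split_ifs with hya hyb
    · rfl
    · rfl
    · exact congrArg some (Quotient.sound
        ((sameCycle_iff_of_forall_ne_apply_eq hfg (ha.not.2 hya) (hb.not.2 hyb)).2 h))
  have hrep : ∀ x, g.SameCycle x (rep x) := fun x => by
    by_cases hx : g.SameCycle x b <;> simp [rep, hx, SameCycle.rfl]
  have hsep : ∀ x y, ¬g.SameCycle x a → ¬g.SameCycle y a →
      f.SameCycle (rep x) (rep y) → g.SameCycle (rep x) (rep y) := by
    intro x y hxa hya h
    by_cases hxb : g.SameCycle x b
    · by_cases hyb : g.SameCycle y b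
      · simp [rep, hxb, hyb, SameCycle.rfl]
      · simp only [rep, hyb, if_false] at h ⊢
        exact ((sameCycle_iff_of_forall_ne_apply_eq hfg hya hyb).1 h.symm).symm
    · simp only [rep, hxb, if_false] at h ⊢
      exact (sameCycle_iff_of_forall_ne_apply_eq hfg hxa hxb).1 h
  have hinj : Function.Injective (Quotient.lift (s := SameCycle.setoid g) κ hκ) := by
    rintro ⟨x⟩ ⟨y⟩ h
    change κ x = κ y at h
    refine Quotient.sound ?_
    change g.SameCycle x y
    by_cases hxa : g.SameCycle x a <;> by_cases hya : g.SameCycle y a <;>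
      simp only [κ, hxa, hya, if_true, if_false, reduceCtorEq, Option.some_inj] at h
    · exact hxa.trans hya.symm
    · exact ((hrep x).trans (hsep x y hxa hya (Quotient.exact h))).trans (hrep y).symm
  simpa using Nat.card_le_card_of_injective _ hinj

theorem card_quotient_sameCycle_le_of_forall_sameCycle [Finite α] {f : Perm β} {g : Perm α}
    (ι : α → β) (hstep : ∀ i, f.SameCycle (ι i) (ι (g i)))
    (hcover : ∀ x, ∃ i, f.SameCycle x (ι i)) :
    Nat.card (Quotient (SameCycle.setoid f)) ≤ Nat.card (Quotient (SameCycle.setoid g)) := by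
  have hmap : ∀ i j, g.SameCycle i j → f.SameCycle (ι i) (ι j) := by
    intro i j h
    obtain ⟨k, rfl⟩ := h.exists_nat_pow_eq
    clear h
    induction k with
    | zero => exact SameCycle.rfl
    | succ k ih =>
      rw [pow_succ', mul_apply]
      exact ih.trans (hstep _)
  refine Nat.card_le_card_of_surjective
    (Quotient.map (sa := SameCycle.setoid g) (sb := SameCycle.setoid f) ι hmap) ?_
  rintro ⟨x⟩
  obtain ⟨i, hi⟩ := hcover x
  exact ⟨⟦i⟧, Quotient.sound hi.symm⟩

end Equiv.Perm

theorem numOrbits_eq_card_quotient_sameCycle {m : ℕ} (p : Perm (Fin m)) :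
    numOrbits p = Nat.card (Quotient (SameCycle.setoid p)) := by
  rw [numOrbits, card_quotient_sameCycle, card_fixedPoints, Fintype.card_fin, cycleType_def,
    Multiset.card_map, Finset.card_val]

theorem Function.Embedding.card_add_le_of_forall_notMem_range {α β : Type*} [Fintype α]
    [Fintype β] (ι : α ↪ β) (s : Finset β) (hs : ∀ x ∈ s, x ∉ Set.range ι) :
    #s + Fintype.card α ≤ Fintype.card β := by
  classical
  have hdisj : Disjoint s (univ.map ι) :=
    disjoint_left.2 fun x hx hι => hs x hx (by simpa using hι)
  simpa [card_union_of_disjoint hdisj] using card_le_univ (s ∪ univ.map ι)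

namespace OrderEmbedding

open Fin.NatCast

variable {d m : ℕ} [NeZero d] (ι : Fin d ↪o Fin m)

/-- `ι (cyclicRank ι x)` is the first point of the image of `ι` at or cyclically after `x`. -/
def cyclicRank (x : Fin m) : Fin d := (#{i | ι i < x} : ℕ)

theorem cyclicRank_apply (i : Fin d) : ι.cyclicRank (ι i) = i := by
  have hIio : ({j | ι j < ι i} : Finset (Fin d)) = Iio i := by ext; simp
  rw [cyclicRank, hIio, Fin.card_Iio, Fin.cast_val_eq_self]

theorem cyclicRank_add_one [NeZero m] (x : Fin m) :
    ι.cyclicRank (x + 1) = (#{i | ι i ≤ x} : ℕ) := by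
  rw [cyclicRank]
  by_cases hx : x.val + 1 < m
  · have hval := Fin.val_add_one_of_lt' hx
    congr 3
    ext i
    simp only [Fin.lt_def, Fin.le_def, hval]
    omega
  · have hx0 : x + 1 = 0 := by
      rw [Fin.ext_iff, Fin.val_add, Fin.val_zero, Fin.val_one', Nat.add_mod_mod,
        show x.val + 1 = m by omega, Nat.mod_self]
    have hle : ∀ i, ι i ≤ x := fun i => by fin_omega
    simp [hx0, hle]

theorem cyclicRank_add_one_of_notMem [NeZero m] {x : Fin m} (hx : x ∉ Set.range ι) :
    ι.cyclicRank (x + 1) = ι.cyclicRank x := by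
  rw [cyclicRank_add_one, cyclicRank]
  congr 3
  ext i
  exact ⟨fun h => h.lt_of_ne fun h' => hx ⟨i, h'⟩, le_of_lt⟩

theorem cyclicRank_apply_add_one [NeZero m] (i : Fin d) : ι.cyclicRank (ι i + 1) = i + 1 := by
  have hIic : ({j | ι j ≤ ι i} : Finset (Fin d)) = Iic i := by ext; simp
  rw [cyclicRank_add_one, hIic, Fin.card_Iic, Nat.cast_succ, Fin.cast_val_eq_self]

theorem sameCycle_cyclicRank [NeZero m] (hm : m = d + 2) {f : Perm (Fin m)}
    (hf : ∀ x ∉ Set.range ι, f x = x + 1) (x : Fin m) : f.SameCycle x (ι (ι.cyclicRank x)) := by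
  have hstep : ∀ y ∉ Set.range ι, f.SameCycle y (y + 1) := fun y hy => by
    rw [← hf y hy]
    exact sameCycle_apply_right.2 SameCycle.rfl
  by_cases hx : x ∈ Set.range ι
  · obtain ⟨i, rfl⟩ := hx
    rw [cyclicRank_apply]
  by_cases hx1 : x + 1 ∈ Set.range ι
  · obtain ⟨i, hi⟩ := hx1
    rw [← cyclicRank_add_one_of_notMem ι hx, ← hi, cyclicRank_apply, hi]
    exact hstep x hx
  have hx2 : x + 1 + 1 ∈ Set.range ι := by
    by_contra hx2
    have hone : (1 : Fin m) ≠ 0 := by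
      rw [Ne, Fin.one_eq_zero_iff]
      omega
    have htwo : (1 + 1 : Fin m) ≠ 0 := by
      rw [Ne, Fin.ext_iff]
      simp [Fin.val_add, Nat.mod_eq_of_lt (show 2 < m by have := NeZero.pos d; omega)]
    have hthree : #{x, x + 1, x + 1 + 1} = 3 :=
      card_eq_three.2 ⟨x, x + 1, x + 1 + 1, by simp [hone], by simp [add_assoc, htwo],
        by simp [hone], rfl⟩
    have hcard := ι.toEmbedding.card_add_le_of_forall_notMem_range {x, x + 1, x + 1 + 1}
      (by simp only [mem_insert, mem_singleton]; rintro y (rfl | rfl | rfl) <;> assumption)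
    simp only [hthree, Fintype.card_fin] at hcard
    omega
  obtain ⟨i, hi⟩ := hx2
  rw [← cyclicRank_add_one_of_notMem ι hx, ← cyclicRank_add_one_of_notMem ι hx1, ← hi,
    cyclicRank_apply, hi]
  exact (hstep x hx).trans (hstep _ hx1)

theorem card_quotient_sameCycle_le_of_forall_apply_eq [NeZero m] (hm : m = d + 2)
    {f : Perm (Fin m)} {g : Perm (Fin d)} (π : Fin d → Fin d)
    (hf : ∀ x ∉ Set.range ι, f x = x + 1) (hfι : ∀ i, f (ι i) = ι (π i) + 1)
    (hg : ∀ i, g i = π i + 1) :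
    Nat.card (Quotient (SameCycle.setoid f)) ≤ Nat.card (Quotient (SameCycle.setoid g)) := by
  refine card_quotient_sameCycle_le_of_forall_sameCycle ι (fun i => ?_)
    (fun x => ⟨_, ι.sameCycle_cyclicRank hm hf x⟩)
  have hnext := ι.sameCycle_cyclicRank hm hf (ι (π i) + 1)
  rw [cyclicRank_apply_add_one, ← hg, ← hfι] at hnext
  exact (sameCycle_apply_right.2 SameCycle.rfl).trans hnext

end OrderEmbedding

theorem boundaryPerm_apply (G : GaussDiagram) [NeZero (2 * G.n)] (x : Fin (2 * G.n)) :
    boundaryPerm G x = G.pairing x + 1 :=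
  finRotate_apply _

theorem IsChordDeletion.numOrbits_boundaryPerm_le {G₁ G₂ : GaussDiagram}
    (h : IsChordDeletion G₁ G₂) (hn : G₁.n ≠ 0) :
    numOrbits (boundaryPerm G₂) ≤ numOrbits (boundaryPerm G₁) + 1 := by
  obtain ⟨hn₂, ι, hι, a, ha⟩ := h
  have : NeZero (2 * G₁.n) := ⟨by omega⟩
  have : NeZero (2 * G₂.n) := ⟨by omega⟩
  set b := G₂.pairing a
  have hab : a ≠ b := (G₂.fixfree a).symm
  have hrange : ∀ x ∉ Set.range ι, x = a ∨ x = b := by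
    intro x hx
    by_contra! hne
    have hthree : #{x, a, b} = 3 := card_eq_three.2 ⟨x, a, b, hne.1, hne.2, hab, rfl⟩
    have hcard := ι.toEmbedding.card_add_le_of_forall_notMem_range {x, a, b} (by
      simp only [mem_insert, mem_singleton]
      rintro y (rfl | rfl | rfl)
      exacts [hx, fun ⟨i, hi⟩ => (ha i).1 hi, fun ⟨i, hi⟩ => (ha i).2 hi])
    simp only [hthree, Fintype.card_fin] at hcard
    omega
  set f := boundaryPerm G₂ * swap a b
  have hf : ∀ x ∉ Set.range ι, f x = x + 1 := by
    intro x hx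
    rcases hrange x hx with rfl | rfl
    · simp [f, b, boundaryPerm_apply, G₂.involutive]
    · simp [f, b, boundaryPerm_apply]
  have hfι : ∀ i, f (ι i) = ι (G₁.pairing i) + 1 := fun i => by
    simp [f, swap_apply_of_ne_of_ne (ha i).1 (ha i).2, boundaryPerm_apply, hι]
  have hσ : boundaryPerm G₂ = f * swap a b := by simp [f, mul_assoc]
  rw [numOrbits_eq_card_quotient_sameCycle, numOrbits_eq_card_quotient_sameCycle, hσ]
  grw [card_quotient_sameCycle_mul_swap_le f a b,
    ι.card_quotient_sameCycle_le_of_forall_apply_eq (by omega) G₁.pairing hf hfι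
      (boundaryPerm_apply G₁)]

theorem genusF_le_of_isChordDeletion {G₁ G₂ : GaussDiagram} (h : IsChordDeletion G₁ G₂) :
    genusF G₁ ≤ genusF G₂ := by
  by_cases hn : G₁.n = 0
  · simp [genusF, ribbonBoundary, hn]
  have hc := h.numOrbits_boundaryPerm_le hn
  have hn₂ := h.1
  rw [genusF, genusF, ribbonBoundary, ribbonBoundary, if_neg hn, if_neg (by omega)]
  omega

theorem genusF_le_of_reflTransGen {G₁ G₂ : GaussDiagram}
    (h : Relation.ReflTransGen IsChordDeletion G₁ G₂) : genusF G₁ ≤ genusF G₂ := by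
  induction h with
  | refl => exact le_rfl
  | tail _ hstep ih => exact ih.trans (genusF_le_of_isChordDeletion hstep)

theorem csInf_image_eq_of_forall_exists_le {α ι : Type*} [ConditionallyCompleteLinearOrderBot α]
    [WellFoundedLT α] {f : ι → α} {s t : Set ι} (hts : t ⊆ s)
    (h : ∀ x ∈ s, ∃ y ∈ t, f y ≤ f x) : sInf (f '' s) = sInf (f '' t) := by
  rcases s.eq_empty_or_nonempty with rfl | hs
  · rw [Set.subset_empty_iff.1 hts]
  obtain ⟨x, hx, hfx⟩ := csInf_mem (hs.image f)
  obtain ⟨y, hy, hyx⟩ := h x hx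
  refine le_antisymm (csInf_le_csInf' ⟨f y, Set.mem_image_of_mem f hy⟩ (Set.image_mono hts)) ?_
  exact (csInf_le' (Set.mem_image_of_mem f hy)).trans (hfx ▸ hyx)

/-- The classical knot `K` is represented by a realizable diagram `G₀` and `K̃` is the
`equiv`-class of `G₀`, so the two sides are `g_vc(K̃)` and `g_c(K)`. -/
theorem virtual_canonical_genus_eq_canonical_genus_general
    (equiv : GaussDiagram → GaussDiagram → Prop)
    (Realizable : GaussDiagram → Prop)
    (proj : GaussDiagram → GaussDiagram)
    (hprojR : ∀ G, Realizable (proj G))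
    (h1 : ∀ G₁ G₂, equiv G₁ G₂ → equiv (proj G₁) (proj G₂))
    (h2 : ∀ G, Relation.ReflTransGen IsChordDeletion (proj G) G)
    (h3 : ∀ G, Realizable G → proj G = G)
    (G₀ : GaussDiagram) (hG₀ : Realizable G₀) :
    sInf (genusF '' {G | equiv G G₀}) =
      sInf (genusF '' {G | Realizable G ∧ equiv G G₀}) := by
  refine csInf_image_eq_of_forall_exists_le (fun G hG => hG.2) fun G hG => ?_
  refine ⟨proj G, ⟨hprojR G, ?_⟩, genusF_le_of_reflTransGen (h2 G)⟩
  simpa only [h3 G₀ hG₀] using h1 G G₀ hG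

/-- Manturov's projection theorem implies that the virtual canonical genus of a virtual
knot realizable by a classical knot `K` equals the canonical genus of `K`.  Here the
equivalence relation `equiv` (generated by the Reidemeister moves) and the set
`Realizable` of realizable Gauss diagrams are abstract; the classical knot `K` is
represented by a realizable diagram `G₀` and the virtual knot `K̃` realizable by `K` is
the `equiv`-class of `G₀`.  Then
`g_vc(K̃) = min { genus F_G : G ~ G₀ }` equals
`g_c(K) = min { genus F_G : G realizable, G ~ G₀ }`. -/
theorem virtual_canonical_genus_eq_canonical_genus
    (equiv : GaussDiagram → GaussDiagram → Prop) (hequiv : Equivalence equiv)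
    (Realizable : GaussDiagram → Prop)
    (proj : GaussDiagram → GaussDiagram)
    (hprojR : ∀ G, Realizable (proj G))
    (h1 : ∀ G₁ G₂, equiv G₁ G₂ → equiv (proj G₁) (proj G₂))
    (h2 : ∀ G, Relation.ReflTransGen IsChordDeletion (proj G) G)
    (h3 : ∀ G, Realizable G → proj G = G)
    (G₀ : GaussDiagram) (hG₀ : Realizable G₀) :
    sInf (genusF '' {G | equiv G G₀}) =
      sInf (genusF '' {G | Realizable G ∧ equiv G G₀}) :=
  virtual_canonical_genus_eq_canonical_genus_general equiv Realizable proj hprojR h1 h2 h3 G₀ hG₀
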